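/- arXiv:2203.13336 — 5 statements merged into one kernel-verified Lean document; each statement's English description precedes it below -/
import Mathlib

section
/- For every h₀ ∈ (0,1) there exists a constant c > 0 such that for all β ≥ 1/3, all μ with 0 < μ ≤ 1 and all ξ ∈ ℝ, one has K_μ(ξ) ≥ (1 − h₀/2) + c·√μ·|ξ|. -/
/-- The symbol `T_μ(ξ) = tanh(√μ |ξ|)/(√μ |ξ|)`, with value `1` at `ξ = 0`. -/
noncomputable def Tmu (μ ξ : ℝ) : ℝ :=
  if ξ = 0 then 1 else Real.tanh (Real.sqrt μ * |ξ|) / (Real.sqrt μ * |ξ|)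

/-- The full-dispersion symbol `K_μ(ξ) = T_μ(ξ)·(1 + β μ ξ²)`. -/
noncomputable def Kmu (β μ ξ : ℝ) : ℝ := Tmu μ ξ * (1 + β * μ * ξ ^ 2)

lemma aux_sinh_le (x : ℝ) (hx : 0 ≤ x) : Real.sinh x ≤ x * Real.cosh x := by
  have hD : ∀ y : ℝ, HasDerivAt (fun t : ℝ => t * Real.cosh t - Real.sinh t)
      (y * Real.sinh y) y := by
    intro y
    have h1 := (hasDerivAt_id y).mul (Real.hasDerivAt_cosh y)
    have h2 := Real.hasDerivAt_sinh y
    refine (h1.sub h2).congr_deriv ?_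
    simp only [id]
    ring
  have hmono : MonotoneOn (fun t : ℝ => t * Real.cosh t - Real.sinh t) (Set.Ici 0) := by
    apply monotoneOn_of_deriv_nonneg (convex_Ici 0)
    · exact Continuous.continuousOn (by continuity)
    · intro y hy
      exact (hD y).differentiableAt.differentiableWithinAt
    · intro y hy
      rw [interior_Ici] at hy
      rw [(hD y).deriv]
      exact mul_nonneg (le_of_lt hy) (Real.sinh_nonneg_iff.2 (le_of_lt hy))
  have := hmono (Set.self_mem_Ici) (Set.mem_Ici.2 hx) hx
  simp at this
  linarith

lemma aux_pade (x : ℝ) (hx : 0 ≤ x) : 3 * (x * Real.cosh x) ≤ (3 + x ^ 2) * Real.sinh x := by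
  have hD : ∀ y : ℝ, HasDerivAt (fun t : ℝ => (3 + t ^ 2) * Real.sinh t - 3 * (t * Real.cosh t))
      (y * (y * Real.cosh y - Real.sinh y)) y := by
    intro y
    have h1 := ((hasDerivAt_pow 2 y).const_add 3).mul (Real.hasDerivAt_sinh y)
    have h2 := ((hasDerivAt_id y).mul (Real.hasDerivAt_cosh y)).const_mul (3 : ℝ)
    refine (h1.sub h2).congr_deriv ?_
    simp only [id]
    ring
  have hmono : MonotoneOn (fun t : ℝ => (3 + t ^ 2) * Real.sinh t - 3 * (t * Real.cosh t))
      (Set.Ici 0) := by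
    apply monotoneOn_of_deriv_nonneg (convex_Ici 0)
    · exact Continuous.continuousOn (by continuity)
    · intro y hy
      exact (hD y).differentiableAt.differentiableWithinAt
    · intro y hy
      rw [interior_Ici] at hy
      rw [(hD y).deriv]
      exact mul_nonneg (le_of_lt hy) (by linarith [aux_sinh_le y (le_of_lt hy)])
  have := hmono (Set.self_mem_Ici) (Set.mem_Ici.2 hx) hx
  simp at this
  linarith

lemma aux_tanh_pade (x : ℝ) (hx : 0 ≤ x) : x ≤ Real.tanh x * (1 + x ^ 2 / 3) := by
  have hc : 0 < Real.cosh x := Real.cosh_pos x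
  rw [Real.tanh_eq_sinh_div_cosh]
  rw [div_mul_eq_mul_div, le_div_iff₀ hc]
  nlinarith [aux_pade x hx]

lemma aux_tanh_large (x : ℝ) (hx : 8 ≤ x) : (3 : ℝ) / 4 ≤ Real.tanh x := by
  have he : (7 : ℝ) ≤ Real.exp (2 * x) := by
    have := Real.add_one_le_exp (2 * x)
    linarith
  have hex : 0 < Real.exp x := Real.exp_pos x
  have hexn : 0 < Real.exp (-x) := Real.exp_pos (-x)
  have hmul : Real.exp x * Real.exp (-x) = 1 := by
    rw [← Real.exp_add]; simp
  have h2 : Real.exp (2 * x) = Real.exp x * Real.exp x := by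
    rw [← Real.exp_add]; ring_nf
  rw [Real.tanh_eq_sinh_div_cosh, Real.sinh_eq, Real.cosh_eq]
  rw [le_div_iff₀ (by positivity)]
  nlinarith

theorem Kmu_lower_bound_large_beta (h₀ : ℝ) (hh₀ : 0 < h₀) (hh₀' : h₀ < 1) :
    ∃ c > 0, ∀ β : ℝ, 1/3 ≤ β → ∀ μ : ℝ, 0 < μ → μ ≤ 1 → ∀ ξ : ℝ,
      (1 - h₀ / 2) + c * Real.sqrt μ * |ξ| ≤ Kmu β μ ξ := by
  refine ⟨h₀ / 16, by positivity, ?_⟩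
  intro β hβ μ hμ hμ1 ξ
  by_cases hξ : ξ = 0
  · subst hξ
    simp [Kmu, Tmu]
    linarith
  · set x : ℝ := Real.sqrt μ * |ξ| with hxdef
    have hxpos : 0 < x := mul_pos (Real.sqrt_pos.2 hμ) (abs_pos.2 hξ)
    have hμξ : μ * ξ ^ 2 = x ^ 2 := by
      rw [hxdef, mul_pow, Real.sq_sqrt hμ.le, sq_abs]
    have hK : Kmu β μ ξ = Real.tanh x / x * (1 + β * x ^ 2) := by
      rw [Kmu, Tmu, if_neg hξ, ← hxdef, mul_assoc, hμξ]
    have htanh : 0 < Real.tanh x := by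
      rw [Real.tanh_eq_sinh_div_cosh]
      exact div_pos (Real.sinh_pos_iff.2 hxpos) (Real.cosh_pos x)
    rw [hK]
    have hβx : 1 + x ^ 2 / 3 ≤ 1 + β * x ^ 2 := by nlinarith
    have hgoal : h₀ / 16 * Real.sqrt μ * |ξ| = h₀ / 16 * x := by rw [hxdef]; ring
    rw [hgoal]
    rcases le_or_gt x 8 with hx8 | hx8
    · -- small x : K ≥ 1
      have h1 : 1 ≤ Real.tanh x / x * (1 + x ^ 2 / 3) := by
        rw [div_mul_eq_mul_div, le_div_iff₀ hxpos]
        have := aux_tanh_pade x hxpos.le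
        linarith
      have h2 : Real.tanh x / x * (1 + x ^ 2 / 3) ≤ Real.tanh x / x * (1 + β * x ^ 2) :=
        mul_le_mul_of_nonneg_left hβx (by positivity)
      have h3 : h₀ / 16 * x ≤ h₀ / 2 := by nlinarith
      calc 1 - h₀ / 2 + h₀ / 16 * x ≤ 1 := by linarith
        _ ≤ Real.tanh x / x * (1 + β * x ^ 2) := le_trans h1 h2
    · -- large x : K ≥ x/4
      have ht : (3 : ℝ) / 4 ≤ Real.tanh x := aux_tanh_large x hx8.le
      have h1 : x / 4 ≤ Real.tanh x / x * (1 + β * x ^ 2) := by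
        have hb : x ^ 2 / 3 ≤ β * x ^ 2 := by nlinarith
        rw [div_mul_eq_mul_div, le_div_iff₀ hxpos]
        nlinarith
      have h2 : 1 - h₀ / 2 + h₀ / 16 * x ≤ x / 4 := by nlinarith
      linarith
end

section
/- There exists an absolute constant c > 0 such that for all β with 0 < β < 1/3, all μ with 0 < μ ≤ 1 and all ξ ∈ ℝ, one has K_μ(ξ) ≥ β + c·β·√μ·|ξ|. -/
open Real

lemma Real.le_one_add_mul_tanh (x : ℝ) : x ≤ (1 + x) * tanh x := by
  have hsum : 0 < exp x + exp (-x) := by positivity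
  have hexp : 1 + 2 * x ≤ exp x * exp x := by
    rw [← exp_add]; linarith [add_one_le_exp (x + x)]
  have hinv : exp x * exp (-x) = 1 := by rw [← exp_add, add_neg_cancel, exp_zero]
  rw [tanh_eq, mul_div_assoc', le_div_iff₀ hsum]
  nlinarith [mul_le_mul_of_nonneg_right hexp (exp_pos (-x)).le]

lemma Real.inv_one_add_le_tanh_div {x : ℝ} (hx : 0 < x) : (1 + x)⁻¹ ≤ tanh x / x := by
  rw [inv_eq_one_div, div_le_div_iff₀ (by linarith) hx, one_mul, mul_comm]
  exact le_one_add_mul_tanh x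

lemma Kmu_eq_tanh_div_mul {β μ ξ : ℝ} (hμ : 0 ≤ μ) (hξ : ξ ≠ 0) :
    Kmu β μ ξ = tanh (√μ * |ξ|) / (√μ * |ξ|) * (1 + β * (√μ * |ξ|) ^ 2) := by
  rw [Kmu, Tmu, if_neg hξ, mul_pow, sq_sqrt hμ, sq_abs, mul_assoc β]

lemma mul_add_mul_div_three_le_div_one_add {β x : ℝ} (hβ : 0 ≤ β) (hβ' : β ≤ 3 / 5)
    (hx : 0 ≤ x) : β + 1 / 3 * β * x ≤ (1 + β * x ^ 2) / (1 + x) := by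
  rw [le_div_iff₀ (by linarith)]
  nlinarith [mul_nonneg hβ (sq_nonneg (x - 1))]

theorem Kmu_lower_bound_small_beta :
    ∃ c > 0, ∀ β : ℝ, 0 < β → β < 1/3 → ∀ μ : ℝ, 0 < μ → μ ≤ 1 → ∀ ξ : ℝ,
      β + c * β * Real.sqrt μ * |ξ| ≤ Kmu β μ ξ := by
  refine ⟨1 / 3, by norm_num, fun β hβ hβ3 μ hμ _ ξ => ?_⟩
  rcases eq_or_ne ξ 0 with rfl | hξ
  · simp only [Kmu, Tmu]; norm_num; linarith
  set x := √μ * |ξ|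
  have hx : 0 < x := mul_pos (sqrt_pos.mpr hμ) (abs_pos.mpr hξ)
  calc β + 1 / 3 * β * √μ * |ξ| = β + 1 / 3 * β * x := by ring
    _ ≤ (1 + β * x ^ 2) / (1 + x) :=
        mul_add_mul_div_three_le_div_one_add hβ.le (by linarith) hx.le
    _ = (1 + x)⁻¹ * (1 + β * x ^ 2) := by rw [div_eq_inv_mul]
    _ ≤ tanh x / x * (1 + β * x ^ 2) :=
        mul_le_mul_of_nonneg_right (inv_one_add_le_tanh_div hx) (by positivity)
    _ = Kmu β μ ξ := (Kmu_eq_tanh_div_mul hμ.le hξ).symm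
end

section
/- There exists an absolute constant C > 0 such that for all μ with 0 < μ ≤ 1, all β ≥ 0 and all ξ > 0, the derivative of the map ξ ↦ √(K_μ(ξ)) satisfies |d/dξ √(K_μ(ξ))| ≤ C·( ⟨ξ⟩^{-1} + √β·μ^{1/4}·⟨ξ⟩^{-1/2} ). -/
open Real

lemma aux_tanh_nonneg {x : ℝ} (hx : 0 ≤ x) : 0 ≤ Real.tanh x := by
  rw [Real.tanh_eq_sinh_div_cosh]
  exact div_nonneg (Real.sinh_nonneg_iff.2 hx) (Real.cosh_pos x).le

lemma aux_tanh_lt_one (x : ℝ) : Real.tanh x < 1 := by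
  rw [Real.tanh_eq_sinh_div_cosh]
  exact (div_lt_one (Real.cosh_pos x)).2 (Real.sinh_lt_cosh x)

lemma aux_hasDerivAt_tanh (y : ℝ) : HasDerivAt Real.tanh (1 / Real.cosh y ^ 2) y := by
  have h := (Real.hasDerivAt_sinh y).div (Real.hasDerivAt_cosh y) (ne_of_gt (Real.cosh_pos y))
  have h2 : Real.cosh y * Real.cosh y - Real.sinh y * Real.sinh y = 1 := by
    have := Real.cosh_sq_sub_sinh_sq y
    nlinarith [this]
  rw [show Real.tanh = fun x => Real.sinh x / Real.cosh x from
    funext fun x => Real.tanh_eq_sinh_div_cosh x]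
  rw [h2] at h
  exact h

lemma aux_sinh_le_mul_cosh {x : ℝ} (hx : 0 ≤ x) : Real.sinh x ≤ x * Real.cosh x := by
  have key : MonotoneOn (fun y : ℝ => y * Real.cosh y - Real.sinh y) (Set.Ici 0) := by
    apply monotoneOn_of_deriv_nonneg (convex_Ici 0)
    · exact ((continuous_id.mul Real.continuous_cosh).sub Real.continuous_sinh).continuousOn
    · intro y _
      exact (((hasDerivAt_id y).mul (Real.hasDerivAt_cosh y)).sub
        (Real.hasDerivAt_sinh y)).differentiableAt.differentiableWithinAt
    · intro y hy
      rw [interior_Ici, Set.mem_Ioi] at hy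
      have hd : HasDerivAt (fun y : ℝ => y * Real.cosh y - Real.sinh y)
          (1 * Real.cosh y + y * Real.sinh y - Real.cosh y) y :=
        ((hasDerivAt_id y).mul (Real.hasDerivAt_cosh y)).sub (Real.hasDerivAt_sinh y)
      rw [hd.deriv]
      have := Real.sinh_nonneg_iff.2 hy.le
      nlinarith
  have h0 : (0:ℝ) * Real.cosh 0 - Real.sinh 0 = 0 := by simp
  have := key (Set.mem_Ici.2 le_rfl) (Set.mem_Ici.2 hx) hx
  simp only [h0] at this
  linarith [this]

lemma aux_tanh_le_self {x : ℝ} (hx : 0 ≤ x) : Real.tanh x ≤ x := by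
  rw [Real.tanh_eq_sinh_div_cosh, div_le_iff₀ (Real.cosh_pos x)]
  exact aux_sinh_le_mul_cosh hx

lemma aux_tanh_mono {x y : ℝ} (hxy : x ≤ y) : Real.tanh x ≤ Real.tanh y := by
  rw [Real.tanh_eq_sinh_div_cosh, Real.tanh_eq_sinh_div_cosh,
    div_le_div_iff₀ (Real.cosh_pos x) (Real.cosh_pos y)]
  have h := Real.sinh_sub y x
  have h2 : 0 ≤ Real.sinh (y - x) := Real.sinh_nonneg_iff.2 (by linarith)
  nlinarith [h, h2]

lemma aux_cosh_one_lt_two : Real.cosh 1 < 2 := by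
  rw [Real.cosh_eq]
  have h1 := Real.exp_one_lt_d9
  have h2 : Real.exp (-1) < 1 := Real.exp_lt_one_iff.2 (by norm_num)
  norm_num at h1 ⊢
  linarith

lemma aux_half_le_tanh_one : (1:ℝ)/2 ≤ Real.tanh 1 := by
  rw [Real.tanh_eq_sinh_div_cosh, le_div_iff₀ (Real.cosh_pos 1)]
  have h1 : (1:ℝ) ≤ Real.sinh 1 := Real.self_le_sinh_iff.2 zero_le_one
  nlinarith [aux_cosh_one_lt_two, Real.cosh_pos 1]

lemma aux_tanh_ge_half {s : ℝ} (hs : 1 ≤ s) : 1/2 ≤ Real.tanh s :=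
  le_trans aux_half_le_tanh_one (aux_tanh_mono hs)

lemma aux_tanh_lower {s : ℝ} (hs : 0 < s) (h1 : s ≤ 1) : s / 2 ≤ Real.tanh s := by
  rw [Real.tanh_eq_sinh_div_cosh, le_div_iff₀ (Real.cosh_pos s)]
  have hc : Real.cosh s ≤ Real.cosh 1 := by
    apply Real.cosh_le_cosh.2
    rw [abs_of_pos hs, abs_one]; exact h1
  have hsinh : s ≤ Real.sinh s := Real.self_le_sinh_iff.2 hs.le
  nlinarith [aux_cosh_one_lt_two, Real.cosh_pos s]

lemma aux_phi_nonneg {s : ℝ} (hs : 0 < s) : 0 ≤ Real.tanh s - s / Real.cosh s ^ 2 := by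
  rw [Real.tanh_eq_sinh_div_cosh, sub_nonneg, div_le_div_iff₀ (by positivity) (Real.cosh_pos s)]
  have hsinh : s ≤ Real.sinh s := Real.self_le_sinh_iff.2 hs.le
  have hc := Real.one_le_cosh s
  have hcp := Real.cosh_pos s
  have h1 : s * Real.cosh s ≤ s * Real.cosh s ^ 2 := by nlinarith [mul_nonneg (mul_nonneg hs.le hcp.le) (sub_nonneg.2 hc)]
  have h2 : s * Real.cosh s ^ 2 ≤ Real.sinh s * Real.cosh s ^ 2 := by nlinarith
  linarith

lemma aux_phi_le_cube {s : ℝ} (hs : 0 < s) :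
    Real.tanh s - s / Real.cosh s ^ 2 ≤ s ^ 3 := by
  have h1 : s / Real.cosh s ^ 2 = s - s * Real.tanh s ^ 2 := by
    rw [Real.tanh_eq_sinh_div_cosh, div_pow, div_eq_iff (by positivity : Real.cosh s ^ 2 ≠ 0)]
    have := Real.cosh_sq_sub_sinh_sq s
    field_simp
    nlinarith [this]
  rw [h1]
  have h2 : Real.tanh s ≤ s := aux_tanh_le_self hs.le
  have h3 : 0 ≤ Real.tanh s := aux_tanh_nonneg hs.le
  nlinarith [mul_le_mul h2 h2 h3 hs.le, hs.le]


lemma aux_deriv (μ β ξ : ℝ) (hμ : 0 < μ) (hβ : 0 ≤ β) (hξ : 0 < ξ) :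
    deriv (fun x => Real.sqrt (Kmu β μ x)) ξ =
      (((1 / Real.cosh (Real.sqrt μ * ξ) ^ 2 * Real.sqrt μ * (Real.sqrt μ * ξ)
          - Real.tanh (Real.sqrt μ * ξ) * Real.sqrt μ) / (Real.sqrt μ * ξ) ^ 2)
          * (1 + β * μ * ξ ^ 2)
        + Real.tanh (Real.sqrt μ * ξ) / (Real.sqrt μ * ξ) * (β * μ * (2 * ξ)))
      / (2 * Real.sqrt (Real.tanh (Real.sqrt μ * ξ) / (Real.sqrt μ * ξ)
          * (1 + β * μ * ξ ^ 2))) := by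
  have ha0 : 0 < Real.sqrt μ := Real.sqrt_pos.2 hμ
  have hs0 : 0 < Real.sqrt μ * ξ := mul_pos ha0 hξ
  have hv : HasDerivAt (fun x : ℝ => Real.sqrt μ * x) (Real.sqrt μ) ξ := by
    simpa using (hasDerivAt_id ξ).const_mul (Real.sqrt μ)
  have h1 : HasDerivAt (fun x => Real.tanh (Real.sqrt μ * x))
      (1 / Real.cosh (Real.sqrt μ * ξ) ^ 2 * Real.sqrt μ) ξ := by
    exact (aux_hasDerivAt_tanh (Real.sqrt μ * ξ)).comp ξ hv
  have hT : HasDerivAt (fun x => Real.tanh (Real.sqrt μ * x) / (Real.sqrt μ * x))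
      ((1 / Real.cosh (Real.sqrt μ * ξ) ^ 2 * Real.sqrt μ * (Real.sqrt μ * ξ)
        - Real.tanh (Real.sqrt μ * ξ) * Real.sqrt μ) / (Real.sqrt μ * ξ) ^ 2) ξ :=
    h1.div hv (ne_of_gt hs0)
  have hP : HasDerivAt (fun x : ℝ => 1 + β * μ * x ^ 2) (β * μ * (2 * ξ)) ξ := by
    have h := ((hasDerivAt_pow 2 ξ).const_mul (β * μ)).const_add 1
    refine h.congr_deriv ?_
    push_cast; ring
  have hK := hT.mul hP
  have htanhpos : 0 < Real.tanh (Real.sqrt μ * ξ) := by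
    rw [Real.tanh_eq_sinh_div_cosh]
    exact div_pos (Real.sinh_pos_iff.2 hs0) (Real.cosh_pos _)
  have hKpos : 0 < Real.tanh (Real.sqrt μ * ξ) / (Real.sqrt μ * ξ) * (1 + β * μ * ξ ^ 2) := by
    apply mul_pos (div_pos htanhpos hs0)
    nlinarith [mul_nonneg (mul_nonneg hβ hμ.le) (sq_nonneg ξ)]
  have hsq := hK.sqrt (ne_of_gt hKpos)
  have hev : (fun x => Real.sqrt (Kmu β μ x)) =ᶠ[nhds ξ]
      (fun x => Real.sqrt (Real.tanh (Real.sqrt μ * x) / (Real.sqrt μ * x)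
        * (1 + β * μ * x ^ 2))) := by
    filter_upwards [Ioi_mem_nhds hξ] with x hx
    have hx0 : x ≠ 0 := ne_of_gt hx
    simp [Kmu, Tmu, hx0, abs_of_pos (show (0:ℝ) < x from hx)]
  rw [hev.deriv_eq]
  exact hsq.deriv

set_option maxHeartbeats 2000000 in
lemma aux_est (μ β ξ : ℝ) (hμ : 0 < μ) (hμ1 : μ ≤ 1) (hβ : 0 ≤ β) (hξ : 0 < ξ) :
    |((1 / Real.cosh (Real.sqrt μ * ξ) ^ 2 * Real.sqrt μ * (Real.sqrt μ * ξ)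
          - Real.tanh (Real.sqrt μ * ξ) * Real.sqrt μ) / (Real.sqrt μ * ξ) ^ 2
          * (1 + β * μ * ξ ^ 2)
        + Real.tanh (Real.sqrt μ * ξ) / (Real.sqrt μ * ξ) * (β * μ * (2 * ξ)))
      / (2 * Real.sqrt (Real.tanh (Real.sqrt μ * ξ) / (Real.sqrt μ * ξ)
          * (1 + β * μ * ξ ^ 2)))|
    ≤ 10 * ((Real.sqrt (1 + ξ ^ 2))⁻¹
        + Real.sqrt β * Real.sqrt (Real.sqrt μ) * (Real.sqrt (Real.sqrt (1 + ξ ^ 2)))⁻¹) := by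
  set a := Real.sqrt μ with ha_def
  have ha0 : 0 < a := Real.sqrt_pos.2 hμ
  have ha1 : a ≤ 1 := by
    rw [ha_def]; exact (Real.sqrt_le_sqrt hμ1).trans_eq Real.sqrt_one
  have hμa : a ^ 2 = μ := Real.sq_sqrt hμ.le
  have haμ : a * a = μ := by rw [← hμa]; ring
  set s := a * ξ with hs_def
  have hs0 : 0 < s := mul_pos ha0 hξ
  set t := Real.tanh s with ht_def
  set c := Real.cosh s with hc_def
  have ht0 : 0 < t := by
    rw [ht_def, Real.tanh_eq_sinh_div_cosh]
    exact div_pos (Real.sinh_pos_iff.2 hs0) (Real.cosh_pos _)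
  have ht1 : t < 1 := aux_tanh_lt_one s
  have hts : t ≤ s := aux_tanh_le_self hs0.le
  set P := 1 + β * μ * ξ ^ 2 with hP_def
  have hβμξ2 : 0 ≤ β * μ * ξ ^ 2 := mul_nonneg (mul_nonneg hβ hμ.le) (sq_nonneg ξ)
  have hP1 : 1 ≤ P := by rw [hP_def]; linarith
  have hP0 : 0 < P := lt_of_lt_of_le one_pos hP1
  set T := t / s with hT_def
  have hT0 : 0 < T := div_pos ht0 hs0
  have hT1 : T ≤ 1 := (div_le_one hs0).2 hts
  set φ := t - s / c ^ 2 with hφ_def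
  have hφ0 : 0 ≤ φ := aux_phi_nonneg hs0
  have hφ3 : φ ≤ s ^ 3 := aux_phi_le_cube hs0
  have hφ1 : φ ≤ 1 := by
    have hc0 : 0 < c := Real.cosh_pos s
    have h : 0 ≤ s / c ^ 2 := div_nonneg hs0.le (sq_nonneg c)
    rw [hφ_def]; linarith
  have hnum : 1 / c ^ 2 * a * s - t * a = -(a * φ) := by rw [hφ_def]; ring
  rw [hnum]
  have hsTP : Real.sqrt (T * P) = Real.sqrt T * Real.sqrt P := Real.sqrt_mul hT0.le P
  rw [hsTP]
  set u := Real.sqrt T with hu_def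
  set v := Real.sqrt P with hv_def
  set b := Real.sqrt β with hb_def
  set r := Real.sqrt a with hr_def
  set w := Real.sqrt s with hw_def
  set z := Real.sqrt ξ with hz_def
  set ang := Real.sqrt (1 + ξ ^ 2) with hang_def
  set sg := Real.sqrt ang with hsg_def
  have hu0 : 0 < u := Real.sqrt_pos.2 hT0
  have hv0 : 0 < v := Real.sqrt_pos.2 hP0
  have hb0 : 0 ≤ b := Real.sqrt_nonneg β
  have hr0 : 0 < r := Real.sqrt_pos.2 ha0
  have hw0 : 0 < w := Real.sqrt_pos.2 hs0
  have hz0 : 0 ≤ z := Real.sqrt_nonneg ξ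
  have hang0 : 0 < ang := Real.sqrt_pos.2 (by positivity)
  have hsg0 : 0 < sg := Real.sqrt_pos.2 hang0
  have hu2 : u * u = T := Real.mul_self_sqrt hT0.le
  have hv2 : v * v = P := Real.mul_self_sqrt hP0.le
  have hb2 : b * b = β := Real.mul_self_sqrt hβ
  have haa : r * r = a := Real.mul_self_sqrt ha0.le
  have hww : w * w = s := Real.mul_self_sqrt hs0.le
  have hzz : z * z = ξ := Real.mul_self_sqrt hξ.le
  have hsas : r * z = w := by rw [hr_def, hz_def, hw_def, hs_def, Real.sqrt_mul ha0.le]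
  have hu1 : u ≤ 1 := by
    rw [hu_def]
    refine (Real.sqrt_le_left zero_le_one).2 ?_
    rw [one_pow]; exact hT1
  have hr1 : r ≤ 1 := by
    rw [hr_def]
    refine (Real.sqrt_le_left zero_le_one).2 ?_
    rw [one_pow]; exact ha1
  have hangle : ang ≤ 1 + ξ := by
    rw [hang_def]
    refine (Real.sqrt_le_left (by linarith)).2 ?_
    have e : (1 + ξ) ^ 2 = 1 + 2 * ξ + ξ ^ 2 := by ring
    linarith [e]
  have hsgle : sg ≤ 1 + z := by
    rw [hsg_def]
    refine (Real.sqrt_le_left (by linarith)).2 ?_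
    have e : (1 + z) ^ 2 = 1 + 2 * z + z * z := by ring
    linarith [e, hzz, hangle]
  -- absolute value of numerator
  have hNabs : |(-(a * φ) / s ^ 2 * P + T * (β * μ * (2 * ξ)))|
      ≤ a * φ / s ^ 2 * P + T * (β * μ * (2 * ξ)) := by
    have hx1 : 0 ≤ a * φ / s ^ 2 * P :=
      mul_nonneg (div_nonneg (mul_nonneg ha0.le hφ0) (sq_nonneg s)) hP0.le
    have hx2 : 0 ≤ T * (β * μ * (2 * ξ)) :=
      mul_nonneg hT0.le (mul_nonneg (mul_nonneg hβ hμ.le) (by linarith))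
    have h1 : |(-(a * φ) / s ^ 2 * P)| = a * φ / s ^ 2 * P := by
      rw [neg_div, neg_mul, abs_neg, abs_of_nonneg hx1]
    have h2 : |T * (β * μ * (2 * ξ))| = T * (β * μ * (2 * ξ)) := abs_of_nonneg hx2
    calc |(-(a * φ) / s ^ 2 * P + T * (β * μ * (2 * ξ)))|
        ≤ |(-(a * φ) / s ^ 2 * P)| + |T * (β * μ * (2 * ξ))| := abs_add_le _ _
      _ = a * φ / s ^ 2 * P + T * (β * μ * (2 * ξ)) := by rw [h1, h2]
  have hsplit : (a * φ / s ^ 2 * P + T * (β * μ * (2 * ξ))) / (2 * (u * v))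
      = a * φ / s ^ 2 * v / (2 * u) + u * (β * μ * ξ) / v := by
    rw [← hu2, ← hv2]
    field_simp
  -- common bounds
  have hvle : v ≤ 1 + b * a * ξ := by
    rw [hv_def]
    have hbaξ : 0 ≤ b * a * ξ := mul_nonneg (mul_nonneg hb0 ha0.le) hξ.le
    refine (Real.sqrt_le_left (by linarith)).2 ?_
    rw [hP_def]
    have e : (1 + b * a * ξ) ^ 2 = 1 + 2 * (b * a * ξ) + (b * b) * (a * a) * ξ ^ 2 := by ring
    have e2 : (b * b) * (a * a) * ξ ^ 2 = β * μ * ξ ^ 2 := by rw [hb2, haμ]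
    have h3 : 0 ≤ b * a * ξ := mul_nonneg (mul_nonneg hb0 ha0.le) hξ.le
    linarith [e, e2, h3]
  have hm1 : b * a * ξ ≤ v := by
    rw [hv_def]
    refine Real.le_sqrt_of_sq_le ?_
    rw [hP_def]
    have e : (b * a * ξ) ^ 2 = (b * b) * (a * a) * ξ ^ 2 := by ring
    have e2 : (b * b) * (a * a) * ξ ^ 2 = β * μ * ξ ^ 2 := by rw [hb2, haμ]
    linarith [e, e2]
  have hstep1 : β * μ * ξ ≤ b * a * v := by
    have h := mul_le_mul_of_nonneg_left hm1 (mul_nonneg hb0 ha0.le)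
    have e : b * a * (b * a * ξ) = β * μ * ξ := by rw [← hb2, ← haμ]; ring
    linarith [h, e]
  -- main bound
  have main : a * φ / s ^ 2 * v / (2 * u) + u * (β * μ * ξ) / v
      ≤ 2 / ang + 2 * (2 * (b * r) / sg) := by
    rcases le_or_gt s 1 with hcase | hcase
    · -- small s
      have hThalf : 1 / 2 ≤ T := by
        rw [hT_def, le_div_iff₀ hs0]
        linarith [aux_tanh_lower hs0 hcase]
      have huhalf : 1 / 2 ≤ u := by
        have h := mul_le_mul_of_nonneg_left hu1 hu0.le
        linarith [hu2, hThalf, h]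
      have hws1 : w ≤ 1 := by
        rw [hw_def]
        refine (Real.sqrt_le_left zero_le_one).2 ?_
        rw [one_pow]; exact hcase
      have has1 : a * s ≤ 1 := mul_le_one₀ ha1 hs0.le hcase
      have hss1 : s * s ≤ 1 := mul_le_one₀ hcase hs0.le hcase
      have hA : a * φ / s ^ 2 * v / (2 * u) ≤ a * s + b * (a * s ^ 2) := by
        have hXle : a * φ / s ^ 2 ≤ a * s := by
          rw [div_le_iff₀ (pow_pos hs0 2)]
          have h := mul_le_mul_of_nonneg_left hφ3 ha0.le
          have e : a * s * s ^ 2 = a * s ^ 3 := by ring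
          linarith [h, e]
        calc a * φ / s ^ 2 * v / (2 * u) ≤ a * s * v / (2 * u) := by
              have h2u : (0:ℝ) < 2 * u := by linarith
              exact (div_le_div_iff_of_pos_right h2u).2 (mul_le_mul_of_nonneg_right hXle hv0.le)
          _ ≤ a * s * v := div_le_self (mul_nonneg (mul_nonneg ha0.le hs0.le) hv0.le)
              (by linarith)
          _ ≤ a * s * (1 + b * a * ξ) := by
              have h := mul_le_mul_of_nonneg_left hvle (mul_nonneg ha0.le hs0.le)
              linarith [h]
          _ = a * s + b * (a * s ^ 2) := by rw [hs_def]; ring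
      have hA1 : a * s ≤ 2 / ang := by
        rw [le_div_iff₀ hang0]
        have k := mul_le_mul_of_nonneg_left hangle (mul_nonneg ha0.le hs0.le)
        have e2 : a * s * (1 + ξ) = a * s + s * s := by rw [hs_def]; ring
        linarith [k, e2, has1, hss1]
      have hA2 : b * (a * s ^ 2) ≤ 2 * (b * r) / sg := by
        rw [le_div_iff₀ hsg0]
        have ks1 : s ^ 2 ≤ 1 := by
          have e : s ^ 2 = s * s := sq s
          linarith [hss1, e]
        have k01 : r * s ^ 2 ≤ 1 := mul_le_one₀ hr1 (sq_nonneg s) ks1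
        have k02 : s ^ 2 * w ≤ 1 := mul_le_one₀ ks1 hw0.le hws1
        have k0 : r * s ^ 2 * sg ≤ 2 := by
          have hrs2 : (0:ℝ) ≤ r * s ^ 2 := mul_nonneg hr0.le (sq_nonneg s)
          have h := mul_le_mul_of_nonneg_left hsgle hrs2
          have e : r * s ^ 2 * (1 + z) = r * s ^ 2 + s ^ 2 * w := by
            rw [← hsas]; ring
          linarith [h, e, k01, k02]
        have e3 : a * s ^ 2 * sg = r * (r * s ^ 2 * sg) := by rw [← haa]; ring
        have k1 : a * s ^ 2 * sg ≤ 2 * r := by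
          have h := mul_le_mul_of_nonneg_left k0 hr0.le
          linarith [h, e3]
        have h := mul_le_mul_of_nonneg_left k1 hb0
        linarith [h]
      have hB1 : u * (β * μ * ξ) / v ≤ b * a := by
        rw [div_le_iff₀ hv0]
        have hbm : 0 ≤ β * μ * ξ := mul_nonneg (mul_nonneg hβ hμ.le) hξ.le
        have h1 := mul_le_mul_of_nonneg_right hu1 hbm
        linarith [h1, hstep1]
      have hB2 : b * a ≤ 2 * (b * r) / sg := by
        rw [le_div_iff₀ hsg0]
        have krsg : r * sg ≤ 2 := by
          have h := mul_le_mul_of_nonneg_left hsgle hr0.le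
          have e : r * (1 + z) = r + r * z := by ring
          linarith [h, e, hsas, hr1, hws1]
        have e9 : a * sg = r * (r * sg) := by rw [← haa]; ring
        have k2 : a * sg ≤ 2 * r := by
          have h := mul_le_mul_of_nonneg_left krsg hr0.le
          linarith [h, e9]
        have h := mul_le_mul_of_nonneg_left k2 hb0
        linarith [h]
      have h01 : (0:ℝ) ≤ 2 / ang := (div_pos (by norm_num) hang0).le
      linarith [hA, hA1, hA2, hB1, hB2]
    · -- large s
      have hs1 : 1 ≤ s := hcase.le
      have hξ1 : 1 ≤ ξ := by
        have h := mul_le_mul_of_nonneg_right ha1 hξ.le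
        have hsx : s ≤ ξ := by rw [hs_def]; linarith [h]
        linarith
      have hang2 : ang ≤ 2 * ξ := by
        rw [hang_def]
        refine (Real.sqrt_le_left (by linarith)).2 ?_
        have h := mul_le_mul hξ1 hξ1 zero_le_one (zero_le_one.trans hξ1)
        have e : (2 * ξ) ^ 2 = 4 * (ξ * ξ) := by ring
        have e2 : ξ ^ 2 = ξ * ξ := sq ξ
        linarith [h, e, e2]
      have hsg2 : sg ≤ 2 * z := by
        rw [hsg_def]
        refine (Real.sqrt_le_left (by linarith)).2 ?_
        have e : (2 * z) ^ 2 = 4 * (z * z) := by ring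
        linarith [hang2, hzz, hξ1, e]
      have hw1 : 1 ≤ w := by
        rw [hw_def]
        refine (Real.le_sqrt' one_pos).2 ?_
        rw [one_pow]; exact hs1
      have hws : w ≤ s := by
        have h := mul_le_mul_of_nonneg_left hw1 hw0.le
        linarith [h, hww]
      have hTs : T * s = t := by rw [hT_def]; field_simp
      have hthalf : 1 / 2 ≤ t := aux_tanh_ge_half hs1
      have hyy : (2 * (u * w)) * (2 * (u * w)) = 4 * t := by
        have e4 : (2 * (u * w)) * (2 * (u * w)) = 4 * (T * s) := by
          rw [← hu2, ← hww]; ring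
        rw [e4, hTs]
      have hy0 : 0 ≤ 2 * (u * w) := by
        have := mul_nonneg hu0.le hw0.le; linarith
      have q2 : 1 ≤ 2 * (u * w) := by
        by_contra hcon
        push_neg at hcon
        have h := mul_le_mul_of_nonneg_left hcon.le hy0
        linarith [hyy, hthalf, h]
      have q3 : u * w ≤ 1 := by
        by_contra hcon
        push_neg at hcon
        have h := mul_le_mul_of_nonneg_left hcon.le (by linarith : (0:ℝ) ≤ u * w)
        have e5 : (u * w) * (u * w) = t := by rw [← hTs, ← hu2, ← hww]; ring
        linarith [h, e5, ht1]
      have hX0 : (0:ℝ) ≤ a / s ^ 2 := div_nonneg ha0.le (sq_nonneg s)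
      have hA : a * φ / s ^ 2 * v / (2 * u) ≤ a * w / s ^ 2 + b * a / w := by
        have hs2 : (0:ℝ) < s ^ 2 := pow_pos hs0 2
        have hXle : a * φ / s ^ 2 ≤ a / s ^ 2 := by
          have h := mul_le_mul_of_nonneg_left hφ1 ha0.le
          exact (div_le_div_iff_of_pos_right hs2).2 (by linarith [h])
        have h2u : (0:ℝ) < 2 * u := by linarith
        have step1 : a * φ / s ^ 2 * v / (2 * u) ≤ a / s ^ 2 * v / (2 * u) :=
          (div_le_div_iff_of_pos_right h2u).2 (mul_le_mul_of_nonneg_right hXle hv0.le)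
        have hXv0 : (0:ℝ) ≤ a / s ^ 2 * v := mul_nonneg hX0 hv0.le
        have step2 : a / s ^ 2 * v / (2 * u) ≤ a / s ^ 2 * v * w := by
          rw [div_le_iff₀ h2u]
          have h := mul_le_mul_of_nonneg_left q2 hXv0
          linarith [h]
        have step3 : a / s ^ 2 * v * w ≤ a / s ^ 2 * (1 + b * a * ξ) * w := by
          have h := mul_le_mul_of_nonneg_left hvle hX0
          exact mul_le_mul_of_nonneg_right h hw0.le
        have e8 : b * (a * a) * ξ * w / s ^ 2 = b * a / w := by
          rw [div_eq_div_iff (ne_of_gt hs2) (ne_of_gt hw0)]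
          linear_combination (b * (a * a) * ξ) * hww - (b * a * s) * hs_def
        have step4 : a / s ^ 2 * (1 + b * a * ξ) * w
            = a * w / s ^ 2 + b * (a * a) * ξ * w / s ^ 2 := by
          field_simp
        calc a * φ / s ^ 2 * v / (2 * u) ≤ a / s ^ 2 * v * w := step1.trans step2
          _ ≤ a / s ^ 2 * (1 + b * a * ξ) * w := step3
          _ = a * w / s ^ 2 + b * a / w := by rw [step4, e8]
      have hA1 : a * w / s ^ 2 ≤ 2 / ang := by
        have hs2 : (0:ℝ) < s ^ 2 := pow_pos hs0 2
        rw [div_le_div_iff₀ hs2 hang0]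
        have k := mul_le_mul_of_nonneg_left hang2 (mul_nonneg ha0.le hw0.le)
        have e6 : a * w * (2 * ξ) = 2 * (w * s) := by rw [hs_def]; ring
        have h7 := mul_le_mul_of_nonneg_right hws hs0.le
        have e7 : 2 * s ^ 2 = 2 * (s * s) := by ring
        linarith [k, e6, h7, e7]
      have hshared : b * a / w ≤ 2 * (b * r) / sg := by
        rw [div_le_div_iff₀ hw0 hsg0]
        have krsg2 : r * sg ≤ 2 * w := by
          have h := mul_le_mul_of_nonneg_left hsg2 hr0.le
          have e : r * (2 * z) = 2 * (r * z) := by ring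
          linarith [h, e, hsas]
        have e9 : a * sg = r * (r * sg) := by rw [← haa]; ring
        have k3 : a * sg ≤ 2 * (r * w) := by
          have h := mul_le_mul_of_nonneg_left krsg2 hr0.le
          linarith [h, e9]
        have h := mul_le_mul_of_nonneg_left k3 hb0
        linarith [h]
      have hB1 : u * (β * μ * ξ) / v ≤ b * a * u := by
        rw [div_le_iff₀ hv0]
        have h := mul_le_mul_of_nonneg_left hstep1 hu0.le
        linarith [h]
      have hB2 : b * a * u ≤ b * a / w := by
        rw [le_div_iff₀ hw0]
        have h := mul_le_mul_of_nonneg_left q3 (mul_nonneg hb0 ha0.le)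
        linarith [h]
      have h01 : (0:ℝ) ≤ 2 / ang := (div_pos (by norm_num) hang0).le
      linarith [hA, hA1, hshared, hB1, hB2]
  calc |(-(a * φ) / s ^ 2 * P + T * (β * μ * (2 * ξ))) / (2 * (u * v))|
      = |(-(a * φ) / s ^ 2 * P + T * (β * μ * (2 * ξ)))| / (2 * (u * v)) := by
        rw [abs_div, abs_of_pos (by linarith [mul_pos hu0 hv0] : (0:ℝ) < 2 * (u * v))]
    _ ≤ (a * φ / s ^ 2 * P + T * (β * μ * (2 * ξ))) / (2 * (u * v)) :=
        (div_le_div_iff_of_pos_right (by linarith [mul_pos hu0 hv0] : (0:ℝ) < 2 * (u * v))).2 hNabs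
    _ = a * φ / s ^ 2 * v / (2 * u) + u * (β * μ * ξ) / v := hsplit
    _ ≤ 2 / ang + 2 * (2 * (b * r) / sg) := main
    _ ≤ 10 * (ang⁻¹ + b * r * sg⁻¹) := by
        rw [inv_eq_one_div, inv_eq_one_div]
        have h1 : (0:ℝ) ≤ 1 / ang := (div_pos one_pos hang0).le
        have h2 : (0:ℝ) ≤ b * r / sg := div_nonneg (mul_nonneg hb0 hr0.le) hsg0.le
        have e : b * r * (1 / sg) = b * r / sg := by ring
        have e2 : 2 / ang = 2 * (1 / ang) := by ring
        have e3 : 2 * (2 * (b * r) / sg) = 4 * (b * r / sg) := by ring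
        rw [e]
        linarith [e2, e3, h1, h2]


theorem deriv_sqrt_Kmu_bound :
    ∃ C > 0, ∀ μ : ℝ, 0 < μ → μ ≤ 1 → ∀ β : ℝ, 0 ≤ β → ∀ ξ : ℝ, 0 < ξ →
      |deriv (fun x => Real.sqrt (Kmu β μ x)) ξ| ≤
        C * ((1 + ξ ^ 2) ^ (-(1:ℝ)/2)
          + Real.sqrt β * μ ^ ((1:ℝ)/4) * (1 + ξ ^ 2) ^ (-(1:ℝ)/4)) := by
  refine ⟨10, by norm_num, ?_⟩
  intro μ hμ0 hμ1 β hβ ξ hξ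
  rw [aux_deriv μ β ξ hμ0 hβ hξ]
  have h := aux_est μ β ξ hμ0 hμ1 hβ hξ
  have hx0 : (0:ℝ) < 1 + ξ ^ 2 := by positivity
  have e1 : (1 + ξ ^ 2) ^ (-(1:ℝ)/2) = (Real.sqrt (1 + ξ ^ 2))⁻¹ := by
    rw [show (-(1:ℝ)/2) = -(1/2 : ℝ) by norm_num, Real.rpow_neg hx0.le,
      Real.sqrt_eq_rpow]
  have e2 : (1 + ξ ^ 2) ^ (-(1:ℝ)/4) = (Real.sqrt (Real.sqrt (1 + ξ ^ 2)))⁻¹ := by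
    rw [show (-(1:ℝ)/4) = -(1/4 : ℝ) by norm_num, Real.rpow_neg hx0.le]
    congr 1
    rw [show (1/4 : ℝ) = (1/2) * (1/2) by norm_num, Real.rpow_mul hx0.le,
      ← Real.sqrt_eq_rpow, ← Real.sqrt_eq_rpow]
  have e3 : μ ^ ((1:ℝ)/4) = Real.sqrt (Real.sqrt μ) := by
    rw [show ((1:ℝ)/4) = (1/2) * (1/2) by norm_num, Real.rpow_mul hμ0.le,
      ← Real.sqrt_eq_rpow, ← Real.sqrt_eq_rpow]
  rw [e1, e2, e3]
  exact h
end

section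
/- For every n ∈ ℕ there exists a constant C > 0 (depending only on n) such that for all μ > 0 and all ξ > 0, the n-th derivative of the map ξ ↦ √(T_μ(ξ)) satisfies | dⁿ/dξⁿ √(T_μ(ξ)) | ≤ C·μ^{n/2}·(1+μξ²)^{−(1+2n)/4}. (Equivalently, |dⁿ/dξⁿ √(T_μ(ξ))| ≲ μ^{n/2}·⟨√μ ξ⟩^{−1/2−n}.) -/
/-- The symbol `T_μ(ξ) = tanh(√μ ξ)/(√μ ξ)` for `ξ > 0`. -/
noncomputable def Tpos (μ ξ : ℝ) : ℝ := Real.tanh (Real.sqrt μ * ξ) / (Real.sqrt μ * ξ)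

open Real Filter Set Topology
open scoped ContDiff Nat


-- scaling
lemma my_deriv_comp_mul (f0 : ℝ → ℝ) {c : ℝ} (hc : c ≠ 0) (x : ℝ) :
    deriv (fun y => f0 (c * y)) x = c * deriv f0 (c * x) := by
  by_cases h : DifferentiableAt ℝ f0 (c * x)
  · have hinner : HasDerivAt (fun y : ℝ => c * y) c x := by
      simpa using (hasDerivAt_id x).const_mul c
    have hcomp := h.hasDerivAt.comp x hinner
    have : deriv (f0 ∘ fun y : ℝ => c * y) x = deriv f0 (c * x) * c := hcomp.deriv
    rw [show (fun y => f0 (c * y)) = f0 ∘ (fun y : ℝ => c * y) from rfl, this]; ring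
  · have h2 : ¬ DifferentiableAt ℝ (fun y => f0 (c * y)) x := by
      intro hd
      apply h
      have key : f0 = (fun y => f0 (c * y)) ∘ (fun t => c⁻¹ * t) := by
        funext t
        simp [Function.comp, mul_inv_cancel_left₀ hc]
      rw [key]
      have h3 : DifferentiableAt ℝ (fun t : ℝ => c⁻¹ * t) (c * x) :=
        differentiableAt_id.const_mul _
      have h4 : (fun t : ℝ => c⁻¹ * t) (c * x) = x := by
        field_simp
      exact (h4 ▸ hd).comp (c * x) h3
    rw [deriv_zero_of_not_differentiableAt h, deriv_zero_of_not_differentiableAt h2, mul_zero]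

lemma my_iteratedDeriv_comp_mul (g : ℝ → ℝ) {c : ℝ} (hc : c ≠ 0) (n : ℕ) :
    iteratedDeriv n (fun y => g (c * y)) = fun x => c ^ n * iteratedDeriv n g (c * x) := by
  induction n with
  | zero => simp
  | succ n ih =>
    funext x
    rw [iteratedDeriv_succ, ih]
    rw [deriv_const_mul_field]
    rw [my_deriv_comp_mul _ hc]
    rw [← iteratedDeriv_succ]
    ring

lemma tanh_exp_rep (x : ℝ) :
    Real.tanh x = (1 - Real.exp ((-2) * x)) / (1 + Real.exp ((-2) * x)) := by
  rw [Real.tanh_eq_sinh_div_cosh, Real.sinh_eq, Real.cosh_eq]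
  have h2 : (0:ℝ) < Real.exp x + Real.exp (-x) := by positivity
  have h3 : (0:ℝ) < 1 + Real.exp ((-2) * x) := by positivity
  have hab : Real.exp x * Real.exp (-x) = 1 := by
    rw [← Real.exp_add]; simp
  have hbb : Real.exp ((-2) * x) = Real.exp (-x) * Real.exp (-x) := by
    rw [← Real.exp_add]; ring_nf
  rw [div_div_div_cancel_right₀]
  rw [div_eq_div_iff h2.ne' h3.ne', hbb]
  ring_nf
  linear_combination (2 * Real.exp (-x)) * hab
  norm_num

lemma tanh_pos' {x : ℝ} (hx : 0 < x) : 0 < Real.tanh x := by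
  rw [tanh_exp_rep]
  have h1 : Real.exp ((-2) * x) < 1 := by
    rw [Real.exp_lt_one_iff]; nlinarith
  have h2 : (0:ℝ) < 1 + Real.exp ((-2) * x) := by positivity
  apply div_pos (by linarith) h2

lemma tanh_le_one' (x : ℝ) : Real.tanh x ≤ 1 := by
  rw [tanh_exp_rep]
  have h2 : (0:ℝ) < 1 + Real.exp ((-2) * x) := by positivity
  rw [div_le_one h2]
  have := (Real.exp_pos ((-2) * x)).le
  linarith

noncomputable def Qd : ℝ → ℝ := dslope Real.tanh 0

lemma contDiff_tanh' : ContDiff ℝ ∞ Real.tanh := by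
  have : Real.tanh = fun x => Real.sinh x / Real.cosh x :=
    funext fun x => Real.tanh_eq_sinh_div_cosh x
  rw [this]
  exact Real.contDiff_sinh.div Real.contDiff_cosh (fun x => (Real.cosh_pos x).ne')

lemma analyticAt_tanh' : AnalyticAt ℝ Real.tanh 0 := by
  have : Real.tanh = fun x => Real.sinh x / Real.cosh x :=
    funext fun x => Real.tanh_eq_sinh_div_cosh x
  rw [this]
  have hs : AnalyticAt ℝ Real.sinh 0 := by
    have : Real.sinh = fun x => (Real.exp x - Real.exp (-x)) / 2 :=
      funext fun x => Real.sinh_eq x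
    rw [this]
    exact ((analyticAt_rexp).sub ((analyticAt_rexp).comp (analyticAt_id.neg))).div
      analyticAt_const (by norm_num)
  have hc : AnalyticAt ℝ Real.cosh 0 := by
    have : Real.cosh = fun x => (Real.exp x + Real.exp (-x)) / 2 :=
      funext fun x => Real.cosh_eq x
    rw [this]
    exact ((analyticAt_rexp).add ((analyticAt_rexp).comp (analyticAt_id.neg))).div
      analyticAt_const (by norm_num)
  exact hs.div hc (Real.cosh_pos 0).ne'

lemma Qd_of_ne {y : ℝ} (hy : y ≠ 0) : Qd y = Real.tanh y / y := by
  rw [Qd, dslope_of_ne _ hy, slope_def_field]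
  simp [Real.tanh_zero, div_eq_mul_inv]

lemma Qd_pos (y : ℝ) : 0 < Qd y := by
  rcases lt_trichotomy y 0 with hy | hy | hy
  · rw [Qd_of_ne hy.ne]
    have h1 : 0 < Real.tanh (-y) := tanh_pos' (by linarith)
    have h2 : Real.tanh y = -Real.tanh (-y) := by
      rw [Real.tanh_neg]; ring
    rw [h2]
    exact div_pos_of_neg_of_neg (by linarith) hy
  · subst hy
    rw [Qd, dslope_same]
    have ht : HasDerivAt Real.tanh 1 0 := by
      have : Real.tanh = fun x => Real.sinh x / Real.cosh x :=
        funext fun x => Real.tanh_eq_sinh_div_cosh x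
      rw [this]
      have := (Real.hasDerivAt_sinh 0).div (Real.hasDerivAt_cosh 0) (Real.cosh_pos 0).ne'
      exact this.congr_deriv (by simp)
    rw [ht.deriv]; norm_num
  · rw [Qd_of_ne hy.ne']
    exact div_pos (tanh_pos' hy) hy

lemma contDiffAt_Qd (y : ℝ) : ContDiffAt ℝ ∞ Qd y := by
  rcases eq_or_ne y 0 with rfl | hy
  · obtain ⟨p, hp⟩ := analyticAt_tanh'
    exact hp.has_fpower_series_dslope_fslope.analyticAt.contDiffAt
  · have h1 : ContDiffAt ℝ ∞ (fun z : ℝ => Real.tanh z / z) y :=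
      contDiff_tanh'.contDiffAt.div contDiffAt_id hy
    apply h1.congr_of_eventuallyEq
    filter_upwards [isOpen_compl_singleton.mem_nhds (by simpa using hy : y ∈ ({0}ᶜ : Set ℝ))]
      with z hz
    exact Qd_of_ne hz

noncomputable def Fq : ℝ → ℝ := fun y => Real.sqrt (Qd y)

lemma contDiff_Fq : ContDiff ℝ ∞ Fq :=
  contDiff_iff_contDiffAt.2 fun y =>
    (Real.contDiffAt_sqrt (Qd_pos y).ne').comp y (contDiffAt_Qd y)

lemma f_eq_Fq {x : ℝ} (hx : 0 < x) : Real.sqrt (Real.tanh x / x) = Fq x := by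
  rw [Fq, Qd_of_ne hx.ne']

noncomputable def psq : ℝ → ℝ := fun x => (Real.sqrt x)⁻¹

lemma psq_eq {x : ℝ} (hx : 0 < x) : psq x = x ^ (-(1/2) - (0:ℕ) : ℝ) := by
  rw [psq, Real.sqrt_eq_rpow, ← Real.rpow_neg hx.le]
  norm_num

lemma iteratedDeriv_psq (k : ℕ) :
    ∃ c : ℝ, ∀ x : ℝ, 0 < x → iteratedDeriv k psq x = c * x ^ (-(1/2) - (k:ℝ)) := by
  induction k with
  | zero =>
    exact ⟨1, fun x hx => by simpa using psq_eq hx⟩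
  | succ k ih =>
    obtain ⟨c, hc⟩ := ih
    refine ⟨c * (-(1/2) - (k:ℝ)), fun x hx => ?_⟩
    rw [iteratedDeriv_succ]
    have hev : iteratedDeriv k psq =ᶠ[nhds x] fun y => c * y ^ (-(1/2) - (k:ℝ)) := by
      filter_upwards [Ioi_mem_nhds hx] with y hy
      exact hc y hy
    rw [hev.deriv_eq]
    have hd : HasDerivAt (fun y : ℝ => c * y ^ (-(1/2) - (k:ℝ)))
        (c * ((-(1/2) - (k:ℝ)) * x ^ (-(1/2) - (k:ℝ) - 1))) x :=
      (Real.hasDerivAt_rpow_const (Or.inl hx.ne')).const_mul c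
    rw [hd.deriv]
    have : (-(1/2) - (k:ℝ) - 1) = -(1/2) - ((k:ℕ)+1:ℝ) := by push_cast; ring
    rw [this]
    push_cast
    ring

noncomputable def Gf : ℝ → ℝ := fun t => Real.sqrt ((1 - t) / (1 + t))
noncomputable def wf : ℝ → ℝ := fun x => Real.exp ((-2) * x)
noncomputable def gsq : ℝ → ℝ := fun x => Real.sqrt (Real.tanh x)

lemma gsq_eq : gsq = Gf ∘ wf := by
  funext x
  rw [gsq, Function.comp_apply, Gf, wf, tanh_exp_rep]

lemma contDiff_wf : ContDiff ℝ ∞ wf :=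
  Real.contDiff_exp.comp (contDiff_const.mul contDiff_id)

lemma contDiffOn_Gf : ContDiffOn ℝ ∞ Gf (Ioo (-1 : ℝ) 1) := by
  intro t ht
  obtain ⟨ht1, ht2⟩ := ht
  have h1 : (0:ℝ) < 1 - t := by linarith
  have h2 : (0:ℝ) < 1 + t := by linarith
  have hpos : 0 < (1 - t) / (1 + t) := div_pos h1 h2
  have hq : ContDiffAt ℝ ∞ (fun s : ℝ => (1 - s) / (1 + s)) t :=
    (contDiffAt_const.sub contDiffAt_id).div (contDiffAt_const.add contDiffAt_id) h2.ne'
  exact ((Real.contDiffAt_sqrt hpos.ne').comp t hq).contDiffWithinAt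

lemma wf_mapsTo : MapsTo wf (Ioi (0:ℝ)) (Ioo (-1:ℝ) 1) := by
  intro x hx
  constructor
  · have := Real.exp_pos ((-2) * x); simp only [wf]; linarith
  · simp only [wf]
    rw [Real.exp_lt_one_iff]
    simp only [mem_Ioi] at hx
    nlinarith

lemma Gf_bound (m : ℕ) :
    ∃ C > 0, ∀ i ≤ m, ∀ t ∈ Icc (0:ℝ) (Real.exp (-2)),
      ‖iteratedFDerivWithin ℝ i Gf (Ioo (-1:ℝ) 1) t‖ ≤ C := by
  have hsub : Icc (0:ℝ) (Real.exp (-2)) ⊆ Ioo (-1:ℝ) 1 := by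
    intro t ⟨h1, h2⟩
    constructor
    · linarith
    · have : Real.exp (-2) < 1 := by rw [Real.exp_lt_one_iff]; norm_num
      linarith
  have hcompact : IsCompact (Icc (0:ℝ) (Real.exp (-2))) := isCompact_Icc
  induction m with
  | zero =>
    have hcont : ContinuousOn (fun t => ‖iteratedFDerivWithin ℝ 0 Gf (Ioo (-1:ℝ) 1) t‖)
        (Icc (0:ℝ) (Real.exp (-2))) :=
      ((contDiffOn_Gf.continuousOn_iteratedFDerivWithin (by exact_mod_cast le_top)
        (isOpen_Ioo.uniqueDiffOn)).mono hsub).norm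
    obtain ⟨C, hC⟩ := hcompact.exists_bound_of_continuousOn
      ((contDiffOn_Gf.continuousOn_iteratedFDerivWithin (by exact_mod_cast le_top)
        (isOpen_Ioo.uniqueDiffOn)).mono hsub)
    refine ⟨max C 1, by positivity, fun i hi t ht => ?_⟩
    interval_cases i
    exact (hC t ht).trans (le_max_left _ _)
  | succ m ih =>
    obtain ⟨C, hCpos, hC⟩ := ih
    obtain ⟨C', hC'⟩ := hcompact.exists_bound_of_continuousOn
      ((contDiffOn_Gf.continuousOn_iteratedFDerivWithin
        (by exact_mod_cast le_top) (isOpen_Ioo.uniqueDiffOn)).mono hsub)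
    refine ⟨max C (max C' 1), by positivity, fun i hi t ht => ?_⟩
    rcases Nat.lt_or_ge i (m+1) with h | h
    · exact (hC i (Nat.lt_succ_iff.mp h) t ht).trans (le_max_left _ _)
    · have : i = m + 1 := le_antisymm hi h
      subst this
      exact (hC' t ht).trans ((le_max_left _ _).trans (le_max_right _ _))

lemma contDiffOn_gsq : ContDiffOn ℝ ∞ gsq (Ioi 0) := by
  rw [gsq_eq]; exact contDiffOn_Gf.comp contDiff_wf.contDiffOn wf_mapsTo

lemma contDiffOn_psq : ContDiffOn ℝ ∞ psq (Ioi 0) := fun x hx => by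
  have hx' : (0:ℝ) < x := hx
  exact ((Real.contDiffAt_sqrt hx'.ne').inv (Real.sqrt_pos.2 hx').ne').contDiffWithinAt

lemma iteratedDeriv_wf (k : ℕ) (x : ℝ) :
    iteratedDeriv k wf x = (-2)^k * Real.exp ((-2) * x) := by
  rw [show wf = fun s => Real.exp ((-2:ℝ) * s) from rfl, iteratedDeriv_exp_const_mul]

lemma exp_pow_id (i : ℕ) (hi : 1 ≤ i) (x : ℝ) :
    (Real.exp ((-2) * x / i)) ^ i = Real.exp ((-2) * x) := by
  rw [← Real.exp_nat_mul]
  congr 1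
  field_simp

-- key bound on derivatives of gsq
lemma gsq_deriv_bound (n : ℕ) :
    ∃ M > 0, ∀ i, 1 ≤ i → i ≤ n → ∀ x : ℝ, 1 ≤ x →
      ‖iteratedFDerivWithin ℝ i gsq (Ioi 0) x‖ ≤ M * Real.exp ((-2) * x) := by
  obtain ⟨C, hCpos, hC⟩ := Gf_bound n
  refine ⟨(n)! * C * 2^n, by positivity, fun i hi1 hin x hx => ?_⟩
  have hx0 : (0:ℝ) < x := by linarith
  have hxs : x ∈ Ioi (0:ℝ) := hx0
  rw [gsq_eq]
  have hwx : wf x ∈ Icc (0:ℝ) (Real.exp (-2)) := by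
    constructor
    · exact (Real.exp_pos _).le
    · rw [wf]; apply Real.exp_le_exp.2; nlinarith
  have hbound := norm_iteratedFDerivWithin_comp_le (𝕜 := ℝ)
    (g := Gf) (f := wf) (n := i) (s := Ioi (0:ℝ)) (t := Ioo (-1:ℝ) 1) (x := x)
    (N := (∞ : WithTop ℕ∞))
    contDiffOn_Gf contDiff_wf.contDiffOn (by exact_mod_cast le_top)
    isOpen_Ioo.uniqueDiffOn isOpen_Ioi.uniqueDiffOn wf_mapsTo hxs
    (C := C) (D := 2 * Real.exp ((-2) * x / i))
    (fun k hk => hC k (hk.trans hin) (wf x) hwx)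
    (fun k hk1 hki => ?_)
  · refine hbound.trans ?_
    have hDpow : (2 * Real.exp ((-2) * x / i)) ^ i = 2^i * Real.exp ((-2) * x) := by
      rw [mul_pow, exp_pow_id i hi1]
    rw [hDpow]
    have h1 : (i ! : ℝ) ≤ (n ! : ℝ) := by
      exact_mod_cast Nat.factorial_le (Nat.le_of_lt_succ (Nat.lt_succ_of_le hin))
    have h2 : (2:ℝ)^i ≤ 2^n := by
      apply pow_le_pow_right₀ (by norm_num) hin
    have he : (0:ℝ) < Real.exp ((-2) * x) := Real.exp_pos _
    calc (i ! : ℝ) * C * (2 ^ i * Real.exp ((-2) * x))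
        ≤ (n ! : ℝ) * C * (2 ^ n * Real.exp ((-2) * x)) := by
          have := hCpos.le
          apply mul_le_mul (mul_le_mul h1 le_rfl hCpos.le (by positivity)) (by nlinarith)
            (by positivity) (by positivity)
      _ = (n)! * C * 2^n * Real.exp ((-2) * x) := by ring
  · -- derivative bounds for wf
    have heq : ‖iteratedFDerivWithin ℝ k wf (Ioi 0) x‖ = 2^k * Real.exp ((-2)*x) := by
      rw [iteratedFDerivWithin_of_isOpen k isOpen_Ioi hxs,
        norm_iteratedFDeriv_eq_norm_iteratedDeriv, iteratedDeriv_wf, Real.norm_eq_abs,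
        abs_mul, abs_pow]
      simp [abs_of_pos (Real.exp_pos _)]
    rw [heq, mul_pow]
    have hi0 : (0:ℝ) < (i:ℝ) := by exact_mod_cast hi1
    have hpe : (Real.exp ((-2)*x/i))^k = Real.exp ((-2)*x*k/i) := by
      rw [← Real.exp_nat_mul]; congr 1; ring
    have hle : Real.exp ((-2)*x) ≤ (Real.exp ((-2)*x/i))^k := by
      rw [hpe]
      apply Real.exp_le_exp.2
      rw [le_div_iff₀ hi0]
      have hki : (k:ℝ) ≤ (i:ℝ) := by exact_mod_cast hki
      nlinarith
    have h2k : (0:ℝ) ≤ 2^k := by positivity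
    nlinarith [Real.exp_pos ((-2)*x), pow_pos (Real.exp_pos ((-2)*x/i)) k]

lemma exp_decay {i n : ℕ} (hi1 : 1 ≤ i) (hin : i ≤ n) {x : ℝ} (hx : 1 ≤ x) :
    Real.exp ((-2) * x) ≤ (n:ℝ)^n * x ^ (-(i:ℝ)) := by
  have hx0 : (0:ℝ) < x := by linarith
  have hi0 : (0:ℝ) < (i:ℝ) := by exact_mod_cast hi1
  have ht : 2*x/i ≤ Real.exp (2*x/i) := by
    have := Real.add_one_le_exp (2*x/i); linarith
  have h1 : (2*x/i) ^ i ≤ Real.exp (2*x) := by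
    calc (2*x/i)^i ≤ (Real.exp (2*x/i))^i := pow_le_pow_left₀ (by positivity) ht i
      _ = Real.exp (2*x) := by
          rw [← Real.exp_nat_mul]; congr 1; field_simp
  have hpos : (0:ℝ) < (2*x/i)^i := by positivity
  have h2 : Real.exp ((-2) * x) ≤ ((2*x/i)^i)⁻¹ := by
    have : Real.exp ((-2)*x) = (Real.exp (2*x))⁻¹ := by
      rw [← Real.exp_neg]; congr 1; ring
    rw [this]
    exact inv_anti₀ hpos h1
  refine h2.trans ?_
  have hrw : x ^ (-(i:ℝ)) = ((x:ℝ)^i)⁻¹ := by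
    rw [Real.rpow_neg hx0.le, Real.rpow_natCast]
  rw [hrw]
  have hxi : (0:ℝ) < x^i := by positivity
  have h3 : (x:ℝ)^i ≤ (2*x)^i := by
    apply pow_le_pow_left₀ hx0.le (by linarith) i
  have key : ((2*x/i)^i)⁻¹ ≤ (i:ℝ)^i * (x^i)⁻¹ := by
    rw [div_pow, inv_div, div_eq_mul_inv]
    exact mul_le_mul_of_nonneg_left (inv_anti₀ (by positivity) h3) (by positivity)
  refine key.trans ?_
  have h4 : (i:ℝ)^i ≤ (n:ℝ)^n := by
    calc (i:ℝ)^i ≤ (n:ℝ)^i := by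
          apply pow_le_pow_left₀ hi0.le (by exact_mod_cast hin) i
      _ ≤ (n:ℝ)^n := by
          apply pow_le_pow_right₀ (by exact_mod_cast hi1.trans hin) hin
  apply mul_le_mul_of_nonneg_right h4 (by positivity)

noncomputable def fmain : ℝ → ℝ := fun y => Real.sqrt (Real.tanh y / y)

lemma fmain_eqOn : EqOn fmain (fun y => gsq y * psq y) (Ioi (0:ℝ)) := by
  intro y hy
  have hy0 : (0:ℝ) < y := hy
  simp only [fmain, gsq, psq]
  rw [Real.sqrt_div (tanh_pos' hy0).le y, div_eq_mul_inv]

lemma tail_bound (n : ℕ) :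
    ∃ B > 0, ∀ x : ℝ, 1 ≤ x →
      |iteratedDeriv n fmain x| ≤ B * x ^ (-(1/2) - (n:ℝ)) := by
  obtain ⟨M, hMpos, hM⟩ := gsq_deriv_bound n
  choose c hc using iteratedDeriv_psq
  set κ : ℕ → ℝ := fun i => (n.choose i : ℝ) * ((M * (n:ℝ)^n + 1) * |c (n - i)|) with hκ
  have hκnn : ∀ i, 0 ≤ κ i := fun i => by positivity
  refine ⟨(∑ i ∈ Finset.range (n+1), κ i) + 1, by positivity, fun x hx => ?_⟩
  have hx0 : (0:ℝ) < x := by linarith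
  have hxs : x ∈ Ioi (0:ℝ) := hx0
  have hrpos : (0:ℝ) < x ^ (-(1/2) - (n:ℝ)) := Real.rpow_pos_of_pos hx0 _
  -- rewrite as norm of iterated derivative within Ioi 0
  have h0 : |iteratedDeriv n fmain x| = ‖iteratedFDerivWithin ℝ n fmain (Ioi 0) x‖ := by
    rw [iteratedFDerivWithin_of_isOpen n isOpen_Ioi hxs,
      norm_iteratedFDeriv_eq_norm_iteratedDeriv, Real.norm_eq_abs]
  rw [h0, iteratedFDerivWithin_congr fmain_eqOn hxs n]
  have hmul := norm_iteratedFDerivWithin_mul_le (𝕜 := ℝ)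
    contDiffOn_gsq contDiffOn_psq isOpen_Ioi.uniqueDiffOn hxs
    (n := n) (by exact_mod_cast le_top)
  refine hmul.trans ?_
  have hterm : ∀ i ∈ Finset.range (n+1),
      (n.choose i : ℝ) * ‖iteratedFDerivWithin ℝ i gsq (Ioi 0) x‖ *
        ‖iteratedFDerivWithin ℝ (n - i) psq (Ioi 0) x‖ ≤ κ i * x ^ (-(1/2) - (n:ℝ)) := by
    intro i hi
    have hin : i ≤ n := Nat.lt_succ_iff.mp (Finset.mem_range.mp hi)
    have hpnorm : ‖iteratedFDerivWithin ℝ (n - i) psq (Ioi 0) x‖ =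
        |c (n - i)| * x ^ (-(1/2) - ((n - i : ℕ):ℝ)) := by
      rw [iteratedFDerivWithin_of_isOpen _ isOpen_Ioi hxs,
        norm_iteratedFDeriv_eq_norm_iteratedDeriv, Real.norm_eq_abs, hc (n - i) x hx0,
        abs_mul, abs_of_pos (Real.rpow_pos_of_pos hx0 _)]
    rcases Nat.eq_zero_or_pos i with rfl | hi1
    · -- i = 0
      have hg0 : ‖iteratedFDerivWithin ℝ 0 gsq (Ioi 0) x‖ ≤ 1 := by
        rw [iteratedFDerivWithin_of_isOpen _ isOpen_Ioi hxs,
          norm_iteratedFDeriv_eq_norm_iteratedDeriv, Real.norm_eq_abs]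
        simp only [iteratedDeriv_zero]
        rw [gsq, abs_of_nonneg (Real.sqrt_nonneg _)]
        exact Real.sqrt_le_one.2 (tanh_le_one' x)
      rw [hpnorm]
      simp only [Nat.sub_zero, Nat.choose_zero_right, Nat.cast_one, one_mul, hκ]
      have hb : |c n| * x ^ (-(1/2) - ((n:ℕ):ℝ)) ≤
          (M * (n:ℝ)^n + 1) * |c n| * x ^ (-(1/2) - (n:ℝ)) := by
        have hK : (0:ℝ) ≤ M * (n:ℝ)^n := by positivity
        have hA : (0:ℝ) ≤ |c n| * x ^ (-(1/2) - (n:ℝ)) := by positivity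
        push_cast
        nlinarith [mul_nonneg hK hA]
      calc ‖iteratedFDerivWithin ℝ 0 gsq (Ioi 0) x‖ * (|c n| * x ^ (-(1/2) - ((n:ℕ):ℝ)))
          ≤ 1 * (|c n| * x ^ (-(1/2) - ((n:ℕ):ℝ))) := by
            apply mul_le_mul_of_nonneg_right hg0 (by positivity)
        _ = |c n| * x ^ (-(1/2) - ((n:ℕ):ℝ)) := by ring
        _ ≤ (M * (n:ℝ)^n + 1) * |c n| * x ^ (-(1/2) - (n:ℝ)) := hb
        _ = (M * (n:ℝ)^n + 1) * |c (n - 0)| * x ^ (-(1/2) - (n:ℝ)) := by norm_num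
    · -- 1 ≤ i
      have hgnorm := hM i hi1 hin x hx
      have hdecay := exp_decay hi1 hin hx
      have hcomb : x ^ (-(i:ℝ)) * x ^ (-(1/2) - ((n - i : ℕ):ℝ)) = x ^ (-(1/2) - (n:ℝ)) := by
        rw [← Real.rpow_add hx0]
        congr 1
        have : ((n - i : ℕ):ℝ) = (n:ℝ) - (i:ℝ) := by
          push_cast [Nat.cast_sub hin]; ring
        rw [this]; ring
      rw [hpnorm]
      have hgle : ‖iteratedFDerivWithin ℝ i gsq (Ioi 0) x‖ ≤
          M * ((n:ℝ)^n * x ^ (-(i:ℝ))) := by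
        refine hgnorm.trans ?_
        exact mul_le_mul_of_nonneg_left hdecay hMpos.le
      calc (n.choose i : ℝ) * ‖iteratedFDerivWithin ℝ i gsq (Ioi 0) x‖ *
            (|c (n - i)| * x ^ (-(1/2) - ((n - i : ℕ):ℝ)))
          ≤ (n.choose i : ℝ) * (M * ((n:ℝ)^n * x ^ (-(i:ℝ)))) *
            (|c (n - i)| * x ^ (-(1/2) - ((n - i : ℕ):ℝ))) := by
            have h1 : (0:ℝ) ≤ (n.choose i : ℝ) := Nat.cast_nonneg _
            have h2 : (0:ℝ) ≤ |c (n - i)| * x ^ (-(1/2) - ((n - i : ℕ):ℝ)) := by positivity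
            apply mul_le_mul_of_nonneg_right
              (mul_le_mul_of_nonneg_left hgle h1) h2
        _ = (n.choose i : ℝ) * (M * (n:ℝ)^n * |c (n - i)|) *
              (x ^ (-(i:ℝ)) * x ^ (-(1/2) - ((n - i : ℕ):ℝ))) := by ring
        _ = (n.choose i : ℝ) * (M * (n:ℝ)^n * |c (n - i)|) * x ^ (-(1/2) - (n:ℝ)) := by
              rw [hcomb]
        _ ≤ κ i * x ^ (-(1/2) - (n:ℝ)) := by
              apply mul_le_mul_of_nonneg_right _ hrpos.le
              simp only [hκ]
              have hcn : (0:ℝ) ≤ (n.choose i : ℝ) := Nat.cast_nonneg _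
              nlinarith [mul_nonneg hcn (abs_nonneg (c (n - i)))]
  refine (Finset.sum_le_sum hterm).trans ?_
  rw [← Finset.sum_mul]
  have : (∑ i ∈ Finset.range (n+1), κ i) ≤ (∑ i ∈ Finset.range (n+1), κ i) + 1 := by linarith
  exact mul_le_mul_of_nonneg_right this hrpos.le

lemma iteratedDeriv_congr_ev {f g : ℝ → ℝ} {x : ℝ} (h : f =ᶠ[nhds x] g) (n : ℕ) :
    iteratedDeriv n f x = iteratedDeriv n g x := by
  rw [iteratedDeriv_eq_iteratedFDeriv, iteratedDeriv_eq_iteratedFDeriv]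
  congr 1
  have h' : f =ᶠ[nhdsWithin x Set.univ] g := by rwa [nhdsWithin_univ]
  have := Filter.EventuallyEq.iteratedFDerivWithin_eq (𝕜 := ℝ) h' (h.eq_of_nhds) n
  simpa [iteratedFDerivWithin_univ] using this

lemma near_bound (n : ℕ) :
    ∃ A > 0, ∀ x : ℝ, 0 < x → x ≤ 2 → |iteratedDeriv n fmain x| ≤ A := by
  have hcont : ContinuousOn (fun y => iteratedFDeriv ℝ n Fq y) (Icc (0:ℝ) 2) :=
    (ContDiff.continuous_iteratedFDeriv (𝕜 := ℝ) (n := (∞ : WithTop ℕ∞)) (f := Fq)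
      (by exact_mod_cast le_top) contDiff_Fq).continuousOn
  obtain ⟨A, hA⟩ := isCompact_Icc.exists_bound_of_continuousOn hcont
  refine ⟨max A 1, by positivity, fun x hx0 hx2 => ?_⟩
  have hEv : fmain =ᶠ[nhds x] Fq := by
    filter_upwards [Ioi_mem_nhds hx0] with y hy
    exact f_eq_Fq hy
  rw [iteratedDeriv_congr_ev hEv n]
  have : |iteratedDeriv n Fq x| = ‖iteratedFDeriv ℝ n Fq x‖ := by
    rw [norm_iteratedFDeriv_eq_norm_iteratedDeriv, Real.norm_eq_abs]
  rw [this]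
  exact (hA x ⟨hx0.le, hx2⟩).trans (le_max_left _ _)

lemma main_real (n : ℕ) :
    ∃ C > 0, ∀ x : ℝ, 0 < x →
      |iteratedDeriv n fmain x| ≤ C * (1 + x^2) ^ (-(1 + 2*(n:ℝ))/4) := by
  obtain ⟨A, hApos, hA⟩ := near_bound n
  obtain ⟨B, hBpos, hB⟩ := tail_bound n
  set e : ℝ := (1 + 2*(n:ℝ))/4 with he
  have hepos : 0 < e := by positivity
  refine ⟨max (A * 5 ^ e) (B * 2 ^ e), by positivity, fun x hx0 => ?_⟩
  have hbase : (0:ℝ) < 1 + x^2 := by positivity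
  have hneg : -(1 + 2*(n:ℝ))/4 = -e := by rw [he]; ring
  have hzpos : (0:ℝ) < (1 + x^2) ^ (-(1 + 2*(n:ℝ))/4) := Real.rpow_pos_of_pos hbase _
  rcases le_total x 2 with hx2 | hx2
  · -- near region
    refine (hA x hx0 hx2).trans ?_
    have h5 : (5:ℝ) ^ (-e) ≤ (1 + x^2) ^ (-e) :=
      Real.rpow_le_rpow_of_nonpos hbase (by nlinarith) (by linarith)
    have hAeq : A = A * 5 ^ e * 5 ^ (-e) := by
      rw [mul_assoc, ← Real.rpow_add (by norm_num : (0:ℝ) < 5)]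
      simp
    calc A = A * 5 ^ e * 5 ^ (-e) := hAeq
      _ ≤ A * 5 ^ e * (1 + x^2) ^ (-e) := by
          apply mul_le_mul_of_nonneg_left h5 (by positivity)
      _ ≤ max (A * 5 ^ e) (B * 2 ^ e) * (1 + x^2) ^ (-(1 + 2*(n:ℝ))/4) := by
          rw [hneg]
          apply mul_le_mul_of_nonneg_right (le_max_left _ _) (by positivity)
  · -- tail region
    have hx1 : (1:ℝ) ≤ x := by linarith
    refine (hB x hx1).trans ?_
    set P : ℝ := ((x:ℝ)^2) ^ e with hP
    set Q : ℝ := (1 + x^2) ^ e with hQ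
    set R : ℝ := (2:ℝ) ^ e with hR
    have hPpos : 0 < P := Real.rpow_pos_of_pos (by positivity) _
    have hQpos : 0 < Q := Real.rpow_pos_of_pos hbase _
    have hRpos : 0 < R := Real.rpow_pos_of_pos (by norm_num) _
    have key : Q ≤ R * P := by
      rw [hQ, hR, hP, ← Real.mul_rpow (by norm_num) (by positivity)]
      exact Real.rpow_le_rpow hbase.le (by nlinarith) hepos.le
    have hxx : x ^ (-(1/2) - (n:ℝ)) = P⁻¹ := by
      rw [hP, show ((x:ℝ)^2) = x ^ ((2:ℕ):ℝ) from (Real.rpow_natCast x 2).symm,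
        ← Real.rpow_mul hx0.le, ← Real.rpow_neg hx0.le]
      congr 1
      push_cast
      ring
    have hfin : P⁻¹ ≤ R * Q⁻¹ := by
      have h5 := mul_le_mul_of_nonneg_left key
        (mul_pos (inv_pos.2 hPpos) (inv_pos.2 hQpos)).le
      have e1 : P⁻¹*Q⁻¹*Q = P⁻¹ := by field_simp
      have e2 : P⁻¹*Q⁻¹*(R*P) = R*Q⁻¹ := by field_simp
      rw [e1, e2] at h5
      exact h5
    calc B * x ^ (-(1/2) - (n:ℝ)) = B * P⁻¹ := by rw [hxx]
      _ ≤ B * (R * Q⁻¹) := mul_le_mul_of_nonneg_left hfin hBpos.le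
      _ = (B * R) * Q⁻¹ := by ring
      _ = (B * 2 ^ e) * (1 + x^2) ^ (-(1 + 2*(n:ℝ))/4) := by
          rw [hneg, Real.rpow_neg hbase.le, hQ, hR]
      _ ≤ max (A * 5 ^ e) (B * 2 ^ e) * (1 + x^2) ^ (-(1 + 2*(n:ℝ))/4) :=
          mul_le_mul_of_nonneg_right (le_max_right _ _) hzpos.le

theorem iteratedDeriv_sqrt_Tpos_bound (n : ℕ) :
    ∃ C > 0, ∀ μ : ℝ, 0 < μ → ∀ ξ : ℝ, 0 < ξ →
      |iteratedDeriv n (fun x => Real.sqrt (Tpos μ x)) ξ| ≤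
        C * μ ^ ((n : ℝ)/2) * (1 + μ * ξ ^ 2) ^ (-(1 + 2 * (n : ℝ))/4) := by
  obtain ⟨C, hCpos, hC⟩ := main_real n
  refine ⟨C, hCpos, fun μ hμ ξ hξ => ?_⟩
  have hsμ : 0 < Real.sqrt μ := Real.sqrt_pos.2 hμ
  have hfun : (fun x => Real.sqrt (Tpos μ x)) = fun x => fmain (Real.sqrt μ * x) := by
    funext x; rfl
  rw [hfun, my_iteratedDeriv_comp_mul fmain hsμ.ne' n]
  have hxpos : 0 < Real.sqrt μ * ξ := by positivity
  have hbnd := hC _ hxpos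
  have hsq : (Real.sqrt μ * ξ)^2 = μ * ξ^2 := by
    rw [mul_pow, Real.sq_sqrt hμ.le]
  rw [hsq] at hbnd
  rw [abs_mul, abs_pow, abs_of_nonneg hsμ.le]
  have hpow : (Real.sqrt μ)^n = μ ^ ((n:ℝ)/2) := by
    rw [Real.sqrt_eq_rpow, ← Real.rpow_natCast (μ ^ (1/(2:ℝ))) n, ← Real.rpow_mul hμ.le]
    congr 1; ring
  calc (Real.sqrt μ)^n * |iteratedDeriv n fmain (Real.sqrt μ * ξ)|
      ≤ (Real.sqrt μ)^n * (C * (1 + μ * ξ^2) ^ (-(1 + 2*(n:ℝ))/4)) :=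
        mul_le_mul_of_nonneg_left hbnd (by positivity)
    _ = C * μ ^ ((n:ℝ)/2) * (1 + μ * ξ^2) ^ (-(1 + 2*(n:ℝ))/4) := by
        rw [hpow]; ring
end

section
/- There exists an absolute constant C > 0 such that for all μ with 0 < μ ≤ 1 and all ξ, ρ ∈ ℝ, one has | (1+μξ²)^{1/4} − (1+μρ²)^{1/4} | · |ρ| · (1+μρ²)^{−1/4} ≤ C·(1 + |ξ − ρ|). -/
theorem Jmu_symbol_difference_bound :
    ∃ C > 0, ∀ μ : ℝ, 0 < μ → μ ≤ 1 → ∀ ξ ρ : ℝ,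
      |(1 + μ * ξ ^ 2) ^ ((1:ℝ)/4) - (1 + μ * ρ ^ 2) ^ ((1:ℝ)/4)| * |ρ| *
        (1 + μ * ρ ^ 2) ^ (-(1:ℝ)/4) ≤ C * (1 + |ξ - ρ|) := by
  refine ⟨1, one_pos, fun μ hμ hμ1 ξ ρ => ?_⟩
  have hμ0 : (0:ℝ) ≤ μ := hμ.le
  set a : ℝ := Real.sqrt μ * ξ with ha
  set b : ℝ := Real.sqrt μ * ρ with hb
  have hsμ : 0 < Real.sqrt μ := Real.sqrt_pos.2 hμ
  have ha2 : a ^ 2 = μ * ξ ^ 2 := by rw [ha, mul_pow, Real.sq_sqrt hμ0]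
  have hb2 : b ^ 2 = μ * ρ ^ 2 := by rw [hb, mul_pow, Real.sq_sqrt hμ0]
  set x : ℝ := 1 + μ * ξ ^ 2 with hx
  set y : ℝ := 1 + μ * ρ ^ 2 with hy
  have hx1 : (1:ℝ) ≤ x := by nlinarith [sq_nonneg ξ]
  have hy1 : (1:ℝ) ≤ y := by nlinarith [sq_nonneg ρ]
  have hx0 : (0:ℝ) < x := by linarith
  have hy0 : (0:ℝ) < y := by linarith
  set A : ℝ := x ^ ((1:ℝ)/4) with hA
  set B : ℝ := y ^ ((1:ℝ)/4) with hB
  have hA1 : 1 ≤ A := Real.one_le_rpow hx1 (by norm_num)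
  have hB1 : 1 ≤ B := Real.one_le_rpow hy1 (by norm_num)
  have hA4 : A ^ 4 = 1 + a ^ 2 := by
    rw [hA, ← Real.rpow_natCast (x ^ ((1:ℝ)/4)) 4, ← Real.rpow_mul hx0.le]
    norm_num [ha2]
    exact hx
  have hB4 : B ^ 4 = 1 + b ^ 2 := by
    rw [hB, ← Real.rpow_natCast (y ^ ((1:ℝ)/4)) 4, ← Real.rpow_mul hy0.le]
    norm_num [hb2]
    exact hy
  have hyneg : y ^ (-(1:ℝ)/4) = B⁻¹ := by
    rw [show (-(1:ℝ)/4) = -(1/4) by norm_num, Real.rpow_neg hy0.le, hB]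
  -- |a| ≤ A^2, |b| ≤ B^2
  have haA : |a| ≤ A ^ 2 := by nlinarith [sq_abs a, abs_nonneg a, sq_nonneg (A ^ 2 - |a|), sq_nonneg (A ^ 2 + |a|)]
  have hbB : |b| ≤ B ^ 2 := by nlinarith [sq_abs b, abs_nonneg b, sq_nonneg (B ^ 2 - |b|), sq_nonneg (B ^ 2 + |b|)]
  -- |A^2 - B^2| ≤ |a - b|
  have hAB2 : |A ^ 2 - B ^ 2| ≤ |a - b| := by
    have hpos : (0:ℝ) < A ^ 2 + B ^ 2 := by nlinarith
    have e0 : (A ^ 2 - B ^ 2) * (A ^ 2 + B ^ 2) = (a - b) * (a + b) := by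
      linear_combination hA4 - hB4
    have e1 : |A ^ 2 - B ^ 2| * (A ^ 2 + B ^ 2) = |a - b| * |a + b| := by
      rw [← abs_of_pos hpos, ← abs_mul, e0, abs_mul]
    have e2 : |a + b| ≤ A ^ 2 + B ^ 2 := (abs_add_le a b).trans (by linarith)
    have h := mul_le_mul_of_nonneg_left e2 (abs_nonneg (a - b))
    rw [← e1] at h
    exact le_of_mul_le_mul_right h hpos
  -- |A - B| * B ≤ |A^2 - B^2|
  have hABB : |A - B| * B ≤ |A ^ 2 - B ^ 2| := by
    have hpos : (0:ℝ) < A + B := by linarith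
    have e1 : |A ^ 2 - B ^ 2| = |A - B| * (A + B) := by
      rw [← abs_of_pos hpos, ← abs_mul]; ring_nf
    rw [e1]
    exact mul_le_mul_of_nonneg_left (by linarith) (abs_nonneg (A - B))
  have hab : |a - b| = Real.sqrt μ * |ξ - ρ| := by
    rw [show a - b = Real.sqrt μ * (ξ - ρ) by rw [ha, hb]; ring, abs_mul,
      abs_of_nonneg (Real.sqrt_nonneg μ)]
  have hbμ : Real.sqrt μ * |ρ| ≤ B ^ 2 := by
    calc Real.sqrt μ * |ρ| = |b| := by
          rw [hb, abs_mul, abs_of_nonneg (Real.sqrt_nonneg μ)]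
      _ ≤ B ^ 2 := hbB
  -- key: |A - B| * |ρ| ≤ |ξ - ρ| * B
  have key : |A - B| * |ρ| ≤ |ξ - ρ| * B := by
    have h3 : |A - B| * B ≤ Real.sqrt μ * |ξ - ρ| := by rw [← hab]; exact hABB.trans hAB2
    have h5 := mul_le_mul h3 hbμ (by positivity) (by positivity)
    have hB0 : (0:ℝ) < B := by linarith
    have : Real.sqrt μ * (|A - B| * |ρ| * B) ≤ Real.sqrt μ * (|ξ - ρ| * B * B) := by
      have e : Real.sqrt μ * (|A - B| * |ρ| * B) = |A - B| * B * (Real.sqrt μ * |ρ|) := by ring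
      have e' : Real.sqrt μ * (|ξ - ρ| * B * B) = Real.sqrt μ * |ξ - ρ| * B ^ 2 := by ring
      rw [e, e']
      exact h5
    have h6 : |A - B| * |ρ| * B ≤ |ξ - ρ| * B * B := le_of_mul_le_mul_left this hsμ
    exact le_of_mul_le_mul_right h6 hB0
  rw [hyneg, one_mul]
  have hB0 : (0:ℝ) < B := by linarith
  calc |A - B| * |ρ| * B⁻¹ ≤ (|ξ - ρ| * B) * B⁻¹ := by
        apply mul_le_mul_of_nonneg_right key (by positivity)
    _ = |ξ - ρ| := by field_simp
    _ ≤ 1 + |ξ - ρ| := by linarith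
end
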